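/- (Reciprocal projection lemma) Let P, Ψ ∈ S^n with P positive definite, and let S ∈ ℝ^{n×n}. There exists W ∈ ℝ^{n×n} such that the symmetric block matrix [[Ψ + P − (W + Wᵀ), Sᵀ + Wᵀ], [S + W, −P]] is negative definite if and only if Ψ + S + Sᵀ is negative definite. -/

import Mathlib

/-!
Eliminating the block `-P` by its Schur complement, the block matrix is negative definite iff
`-(Ψ + S + Sᵀ) - (S + W - P)ᵀ P⁻¹ (S + W - P)` is positive definite. The subtracted term is
positive semidefinite, and it vanishes for `W = P - S`.
-/

open Matrix

open scoped ComplexOrder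

namespace Matrix

variable {𝕜 : Type*} [RCLike 𝕜] {m n : Type*} [Fintype m] [DecidableEq m] [Fintype n]
  [DecidableEq n]

theorem posDef_iff_posSemidef_and_det_ne_zero {M : Matrix n n 𝕜} :
    M.PosDef ↔ M.PosSemidef ∧ M.det ≠ 0 :=
  ⟨fun h => ⟨h.posSemidef, (isUnit_iff_isUnit_det M).mp h.isUnit |>.ne_zero⟩,
    fun h => h.1.posDef_iff_det_ne_zero.mpr h.2⟩

theorem posDef_fromBlocks₂₂_iff (A : Matrix m m 𝕜) (B : Matrix m n 𝕜) {D : Matrix n n 𝕜}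
    (hD : D.PosDef) [Invertible D] :
    (fromBlocks A B Bᴴ D).PosDef ↔ (A - B * D⁻¹ * Bᴴ).PosDef := by
  simp only [posDef_iff_posSemidef_and_det_ne_zero, PosDef.fromBlocks₂₂ A B hD,
    det_fromBlocks₂₂, invOf_eq_nonsing_inv, mul_ne_zero_iff, hD.det_pos.ne', ne_eq,
    not_false_eq_true, true_and]

theorem posDef_neg_fromBlocks_iff {P : Matrix n n 𝕜} (hP : P.PosDef) (Ψ S W : Matrix n n 𝕜) :
    (-(fromBlocks (Ψ + P - (W + Wᴴ)) (Sᴴ + Wᴴ) (S + W) (-P))).PosDef ↔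
      (-(Ψ + S + Sᴴ) - (S + W - P)ᴴ * P⁻¹ * (S + W - P)).PosDef := by
  have := hP.isUnit.invertible
  have hPP : Pᴴ = P := hP.1
  have hB : -(S + W) = (-(Sᴴ + Wᴴ))ᴴ := by simp
  rw [fromBlocks_neg, neg_neg, hB, posDef_fromBlocks₂₂_iff _ _ hP]
  congr! 1
  simp only [conjTranspose_neg, conjTranspose_add, conjTranspose_sub, conjTranspose_conjTranspose,
    hPP, neg_mul, mul_neg, sub_mul, mul_sub, add_mul, mul_add, mul_assoc,
    inv_mul_of_invertible, mul_inv_of_invertible, one_mul, mul_one]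
  abel

theorem exists_posDef_neg_fromBlocks_iff {P : Matrix n n 𝕜} (hP : P.PosDef) (Ψ S : Matrix n n 𝕜) :
    (∃ W, (-(fromBlocks (Ψ + P - (W + Wᴴ)) (Sᴴ + Wᴴ) (S + W) (-P))).PosDef) ↔
      (-(Ψ + S + Sᴴ)).PosDef := by
  simp only [posDef_neg_fromBlocks_iff hP]
  constructor
  · rintro ⟨W, hW⟩
    have hCorr := hP.inv.posSemidef.conjTranspose_mul_mul_same (S + W - P)
    simpa only [sub_add_cancel] using hW.add_posSemidef hCorr
  · intro h
    exact ⟨P - S, by simpa using h⟩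

end Matrix

theorem reciprocal_projection_lemma_general (n : ℕ)
    (P Ψ S : Matrix (Fin n) (Fin n) ℝ)
    (hP : P.PosDef) :
    (∃ W : Matrix (Fin n) (Fin n) ℝ,
        (-(Matrix.fromBlocks (Ψ + P - (W + Wᵀ)) (Sᵀ + Wᵀ) (S + W) (-P))).PosDef) ↔
      (-(Ψ + S + Sᵀ)).PosDef := by
  simpa only [conjTranspose_eq_transpose_of_trivial] using
    exists_posDef_neg_fromBlocks_iff hP Ψ S

/-- Reciprocal projection lemma: with `P` positive definite and `Ψ` symmetric, there
exists `W` such that `[[Ψ + P − (W + Wᵀ), Sᵀ + Wᵀ], [S + W, −P]] < 0` iff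
`Ψ + S + Sᵀ < 0`. -/
theorem reciprocal_projection_lemma (n : ℕ)
    (P Ψ S : Matrix (Fin n) (Fin n) ℝ)
    (hP : P.PosDef) (hΨ : Ψ.IsSymm) :
    (∃ W : Matrix (Fin n) (Fin n) ℝ,
        (-(Matrix.fromBlocks (Ψ + P - (W + Wᵀ)) (Sᵀ + Wᵀ) (S + W) (-P))).PosDef) ↔
      (-(Ψ + S + Sᵀ)).PosDef :=
  reciprocal_projection_lemma_general n P Ψ S hP
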